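/- For all integers k ≥ 2, n ≥ 3, d, δ with d ≥ (k+1)(k + 3n - 1), (k-1)d + 1 ≤ δ ≤ kd: the inequalities 1 + (1/2)(d - 2n - 1)δ ≤ δ²/(2(k+1)) + ((k + n - 3)/2)δ + (2k - n + 4)/2 lead to a contradiction. Equivalently, 1 + (1/2)(d - 2n - 1)δ > δ²/(2(k+1)) + ((k + n - 3)/2)δ + (2k - n + 4)/2. -/
import Mathlib

lemma key_int (k n d δ : ℤ) (hk : 2 ≤ k) (hn : 3 ≤ n)
    (hd : (k + 1) * (k + 3 * n - 1) ≤ d)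
    (hδ1 : (k - 1) * d + 1 ≤ δ) (hδ2 : δ ≤ k * d) :
    δ ^ 2 + (k + 1) * (k + n - 3) * δ + (k + 1) * (2 * k - n + 4)
      < 2 * (k + 1) + (k + 1) * (d - 2 * n - 1) * δ := by
  have hb : k + 1 ≤ (k + 1) * (d - k - 3 * n + 2) - δ := by nlinarith
  have hδpos : (k + 1) * (k + 8) ≤ δ := by nlinarith
  have hδnn : (0:ℤ) ≤ δ := by nlinarith
  have hknn : (0:ℤ) ≤ k + 1 := by linarith
  nlinarith [mul_le_mul_of_nonneg_left hb hδnn,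
    mul_le_mul_of_nonneg_left hδpos hknn, sq_nonneg k, mul_nonneg hknn hknn]

/-- Numerical core of Claim 1 in the proof of Theorem 4.1: for integers
`k ≥ 2`, `n ≥ 3`, `d ≥ (k+1)(k+3n-1)`, `(k-1)d + 1 ≤ δ ≤ kd`, Voisin's lower
bound exceeds the weakened Ciliberto–Chiantini–Di Gennaro upper bound:
`1 + (1/2)(d - 2n - 1)δ > δ²/(2(k+1)) + ((k+n-3)/2)δ + (2k-n+4)/2`. -/
theorem stmt_17 (k n d δ : ℤ) (hk : 2 ≤ k) (hn : 3 ≤ n)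
    (hd : (k + 1) * (k + 3 * n - 1) ≤ d)
    (hδ1 : (k - 1) * d + 1 ≤ δ) (hδ2 : δ ≤ k * d) :
    1 + (1 / 2 : ℝ) * ((d : ℝ) - 2 * n - 1) * δ >
      (δ : ℝ) ^ 2 / (2 * ((k : ℝ) + 1)) + (((k : ℝ) + n - 3) / 2) * δ
        + (2 * (k : ℝ) - n + 4) / 2 := by
  have h := key_int k n d δ hk hn hd hδ1 hδ2
  have h' : ((δ:ℝ) ^ 2 + ((k:ℝ) + 1) * ((k:ℝ) + n - 3) * δ + ((k:ℝ) + 1) * (2 * k - n + 4))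
      < 2 * ((k:ℝ) + 1) + ((k:ℝ) + 1) * ((d:ℝ) - 2 * n - 1) * δ := by
    exact_mod_cast h
  have hk1 : (0:ℝ) < (k:ℝ) + 1 := by
    have : ((0:ℤ):ℝ) < ((k+1 : ℤ):ℝ) := by exact_mod_cast (by linarith : (0:ℤ) < k + 1)
    push_cast at this; linarith
  rw [gt_iff_lt, ← sub_pos]
  have expand : 1 + (1 / 2 : ℝ) * ((d : ℝ) - 2 * n - 1) * δ -
      ((δ : ℝ) ^ 2 / (2 * ((k : ℝ) + 1)) + (((k : ℝ) + n - 3) / 2) * δ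
        + (2 * (k : ℝ) - n + 4) / 2)
      = (2 * ((k:ℝ) + 1) + ((k:ℝ) + 1) * ((d:ℝ) - 2 * n - 1) * δ
          - ((δ:ℝ) ^ 2 + ((k:ℝ) + 1) * ((k:ℝ) + n - 3) * δ + ((k:ℝ) + 1) * (2 * k - n + 4)))
        / (2 * ((k:ℝ) + 1)) := by
    field_simp
  rw [expand]
  apply div_pos (by linarith) (by linarith)
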